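/- For every word w ∈ Θ* of length k, the history constraint h(w) is satisfied by an assignment ν with domain V₀ ∪ V if and only if the word ⟨∅⟩·w is consistent with some trace α₀,…,α_k such that ν(v₀) = α₀(v) and ν(v) = α_k(v) for all v ∈ V. -/

import Mathlib

/-! Constraints over `V_pre ∪ V_cur` only look at two consecutive instants, so consistency of
`⟨∅⟩·w·ς` with a trace `τ·a` splits into consistency of `⟨∅⟩·w` with `τ` and satisfaction of
`ς` by the last step of `τ` followed by `a`. This is exactly the recursion `h(w·ς) =
update(h(w), ς)`, with the existentially quantified `Ū` playing the role of the last state of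
`τ`; induction on `w` from the right gives the correspondence. -/

namespace ALTLf

/-- Sorts of variables: integers or rationals. -/
inductive VSort where
  | int : VSort
  | rat : VSort
  deriving DecidableEq

/-- Domain of each sort. -/
def Dom : VSort → Type
  | .int => ℤ
  | .rat => ℚ

instance instDomRing : (s : VSort) → CommRing (Dom s)
  | .int => inferInstanceAs (CommRing ℤ)
  | .rat => inferInstanceAs (CommRing ℚ)

instance instDomLinearOrder : (s : VSort) → LinearOrder (Dom s)
  | .int => inferInstanceAs (LinearOrder ℤ)
  | .rat => inferInstanceAs (LinearOrder ℚ)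

instance instDomIsStrictOrderedRing : (s : VSort) → IsStrictOrderedRing (Dom s)
  | .int => inferInstanceAs (IsStrictOrderedRing ℤ)
  | .rat => inferInstanceAs (IsStrictOrderedRing ℚ)

instance (s : VSort) : Inhabited (Dom s) := ⟨0⟩

/-- Arithmetic expressions over variables with lookahead/lookback offset `j : ℤ`
(`(v, j)` refers to the value of `v`, `j` instants ahead; negative `j` is lookback,
used for the `pre`-variables: `v_cur = (v,0)`, `v_pre = (v,-1)`). -/
inductive Expr (V : Type) (sortOf : V → VSort) : VSort → Type where
  | var (v : V) (j : ℤ) : Expr V sortOf (sortOf v)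
  | const {s : VSort} (k : Dom s) : Expr V sortOf s
  | add {s : VSort} (e₁ e₂ : Expr V sortOf s) : Expr V sortOf s
  | smul {s : VSort} (k : Dom s) (e : Expr V sortOf s) : Expr V sortOf s

namespace Expr

variable {V : Type} {sortOf : V → VSort}

def eval (σ : (v : V) → ℤ → Dom (sortOf v)) : {s : VSort} → Expr V sortOf s → Dom s
  | _, .var v j => σ v j
  | _, .const k => k
  | _, .add e₁ e₂ => eval σ e₁ + eval σ e₂
  | _, .smul k e => k * eval σ e

def HasVar : {s : VSort} → Expr V sortOf s → V → ℤ → Prop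
  | _, .var v j, w, i => v = w ∧ j = i
  | _, .const _, _, _ => False
  | _, .add e₁ e₂, w, i => HasVar e₁ w i ∨ HasVar e₂ w i
  | _, .smul _ e, w, i => HasVar e w i

def shift (d : ℤ) : {s : VSort} → Expr V sortOf s → Expr V sortOf s
  | _, .var v j => .var v (j + d)
  | _, .const k => .const k
  | _, .add e₁ e₂ => .add (shift d e₁) (shift d e₂)
  | _, .smul k e => .smul k (shift d e)

def hasLook : {s : VSort} → Expr V sortOf s → Bool
  | _, .var _ j => j != 0
  | _, .const _ => false
  | _, .add e₁ e₂ => hasLook e₁ || hasLook e₂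
  | _, .smul _ e => hasLook e

def isVar : {s : VSort} → Expr V sortOf s → Prop
  | _, .var _ _ => True
  | _, _ => False

end Expr

/-- Arithmetic constraints: comparisons of expressions of equal sort, and
(non-)congruence modulo `n` for integer expressions. -/
inductive Constraint (V : Type) (sortOf : V → VSort) where
  | eq {s : VSort} (e₁ e₂ : Expr V sortOf s)
  | ne {s : VSort} (e₁ e₂ : Expr V sortOf s)
  | lt {s : VSort} (e₁ e₂ : Expr V sortOf s)
  | le {s : VSort} (e₁ e₂ : Expr V sortOf s)
  | cong (n : ℕ) (e₁ e₂ : Expr V sortOf .int)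
  | ncong (n : ℕ) (e₁ e₂ : Expr V sortOf .int)

namespace Constraint

variable {V : Type} {sortOf : V → VSort}

def holds (σ : (v : V) → ℤ → Dom (sortOf v)) : Constraint V sortOf → Prop
  | .eq e₁ e₂ => e₁.eval σ = e₂.eval σ
  | .ne e₁ e₂ => e₁.eval σ ≠ e₂.eval σ
  | .lt e₁ e₂ => e₁.eval σ < e₂.eval σ
  | .le e₁ e₂ => e₁.eval σ ≤ e₂.eval σ
  | .cong n e₁ e₂ => (n : Dom .int) ∣ (e₁.eval σ - e₂.eval σ)
  | .ncong n e₁ e₂ => ¬ ((n : Dom .int) ∣ (e₁.eval σ - e₂.eval σ))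

def HasVar : Constraint V sortOf → V → ℤ → Prop
  | .eq e₁ e₂, w, i => e₁.HasVar w i ∨ e₂.HasVar w i
  | .ne e₁ e₂, w, i => e₁.HasVar w i ∨ e₂.HasVar w i
  | .lt e₁ e₂, w, i => e₁.HasVar w i ∨ e₂.HasVar w i
  | .le e₁ e₂, w, i => e₁.HasVar w i ∨ e₂.HasVar w i
  | .cong _ e₁ e₂, w, i => e₁.HasVar w i ∨ e₂.HasVar w i
  | .ncong _ e₁ e₂, w, i => e₁.HasVar w i ∨ e₂.HasVar w i

/-- `neg c` flips the comparison operator of `c`. -/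
def neg : Constraint V sortOf → Constraint V sortOf
  | .eq e₁ e₂ => .ne e₁ e₂
  | .ne e₁ e₂ => .eq e₁ e₂
  | .lt e₁ e₂ => .le e₂ e₁
  | .le e₁ e₂ => .lt e₂ e₁
  | .cong n e₁ e₂ => .ncong n e₁ e₂
  | .ncong n e₁ e₂ => .cong n e₁ e₂

def shift (d : ℤ) : Constraint V sortOf → Constraint V sortOf
  | .eq e₁ e₂ => .eq (e₁.shift d) (e₂.shift d)
  | .ne e₁ e₂ => .ne (e₁.shift d) (e₂.shift d)
  | .lt e₁ e₂ => .lt (e₁.shift d) (e₂.shift d)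
  | .le e₁ e₂ => .le (e₁.shift d) (e₂.shift d)
  | .cong n e₁ e₂ => .cong n (e₁.shift d) (e₂.shift d)
  | .ncong n e₁ e₂ => .ncong n (e₁.shift d) (e₂.shift d)

def hasLook : Constraint V sortOf → Bool
  | .eq e₁ e₂ => e₁.hasLook || e₂.hasLook
  | .ne e₁ e₂ => e₁.hasLook || e₂.hasLook
  | .lt e₁ e₂ => e₁.hasLook || e₂.hasLook
  | .le e₁ e₂ => e₁.hasLook || e₂.hasLook
  | .cong _ e₁ e₂ => e₁.hasLook || e₂.hasLook
  | .ncong _ e₁ e₂ => e₁.hasLook || e₂.hasLook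

end Constraint

/-- `c` mentions a `pre` (lookback) variable. -/
def MentionsPre {V : Type} {sortOf : V → VSort} (c : Constraint V sortOf) : Prop :=
  ∃ v j, j < 0 ∧ c.HasVar v j

/-- `c` mentions only current variables (offset `0`). -/
def OnlyCur {V : Type} {sortOf : V → VSort} (c : Constraint V sortOf) : Prop :=
  ∀ v j, c.HasVar v j → j = 0

/-- `c` is over `V_pre ∪ V_cur` (offsets `0` and `-1`). -/
def OnlyPC {V : Type} {sortOf : V → VSort} (c : Constraint V sortOf) : Prop :=
  ∀ v j, c.HasVar v j → j = 0 ∨ j = -1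


/-- Temporal formulas. The logic `L` (ALTLf) corresponds to those built from
`atom`, `and`, `not`, `nextS`, `untl` (predicate `IsL`); the remaining
constructors are the usual abbreviations (needed e.g. in negation normal form). -/
inductive Formula (V : Type) (sortOf : V → VSort) where
  | tt
  | ff
  | atom (c : Constraint V sortOf)
  | and (φ ψ : Formula V sortOf)
  | or (φ ψ : Formula V sortOf)
  | not (φ : Formula V sortOf)
  | nextS (φ : Formula V sortOf)
  | nextW (φ : Formula V sortOf)
  | glob (φ : Formula V sortOf)
  | untl (φ ψ : Formula V sortOf)

/-- Assignments of the state variables. -/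
abbrev Assign (V : Type) (sortOf : V → VSort) : Type := (v : V) → Dom (sortOf v)

/-- A trace is a (finite) sequence of assignments; genuine traces are nonempty. -/
abbrev Trace (V : Type) (sortOf : V → VSort) : Type := List (Assign V sortOf)

def defaultA {V : Type} {sortOf : V → VSort} : Assign V sortOf := fun _ => default

/-- Valuation of variables with offset at instant `i` of a trace (out-of-range
references get a default value; they are guarded by well-definedness). -/
def traceVal {V : Type} {sortOf : V → VSort} (τ : Trace V sortOf) (i : ℕ) :
    (v : V) → ℤ → Dom (sortOf v) :=
  fun v j => if 0 ≤ (i : ℤ) + j then (τ.getD ((i : ℤ) + j).toNat defaultA) v else default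

/-- The constraint `c` is well-defined at instant `i` of `τ`. -/
def WellDefC {V : Type} {sortOf : V → VSort} (c : Constraint V sortOf)
    (τ : Trace V sortOf) (i : ℕ) : Prop :=
  ∀ v j, c.HasVar v j → 0 ≤ (i : ℤ) + j ∧ (i : ℤ) + j < τ.length

/-- Finite-trace satisfaction `τ,i ⊨ ψ`. Constraints hold vacuously when not
well-defined. `untl` is given by the standard unfolding of the recursive clause. -/
def Sat {V : Type} {sortOf : V → VSort} (τ : Trace V sortOf) :
    Formula V sortOf → ℕ → Prop
  | .tt, _ => True
  | .ff, _ => False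
  | .atom c, i => i < τ.length ∧ (¬ WellDefC c τ i ∨ c.holds (traceVal τ i))
  | .and φ ψ, i => Sat τ φ i ∧ Sat τ ψ i
  | .or φ ψ, i => Sat τ φ i ∨ Sat τ ψ i
  | .not φ, i => ¬ Sat τ φ i
  | .nextS φ, i => i + 1 < τ.length ∧ Sat τ φ (i + 1)
  | .nextW φ, i => i + 1 < τ.length → Sat τ φ (i + 1)
  | .glob φ, i => ∀ j, i ≤ j → j < τ.length → Sat τ φ j
  | .untl φ ψ, i =>
      ∃ j, i ≤ j ∧ j < τ.length ∧ Sat τ ψ j ∧ ∀ k, i ≤ k → k < j → Sat τ φ k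

/-- `τ ⊨ ψ`. -/
def Models {V : Type} {sortOf : V → VSort} (τ : Trace V sortOf)
    (ψ : Formula V sortOf) : Prop :=
  Sat τ ψ 0

/-- Membership in the core logic `L` (`ALTLf`). -/
def IsL {V : Type} {sortOf : V → VSort} : Formula V sortOf → Prop
  | .atom _ => True
  | .and φ ψ => IsL φ ∧ IsL ψ
  | .not φ => IsL φ
  | .nextS φ => IsL φ
  | .untl φ ψ => IsL φ ∧ IsL ψ
  | _ => False

namespace Formula

variable {V : Type} {sortOf : V → VSort}

def HasVar : Formula V sortOf → V → ℤ → Prop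
  | .tt, _, _ => False
  | .ff, _, _ => False
  | .atom c, v, j => c.HasVar v j
  | .and φ ψ, v, j => HasVar φ v j ∨ HasVar ψ v j
  | .or φ ψ, v, j => HasVar φ v j ∨ HasVar ψ v j
  | .not φ, v, j => HasVar φ v j
  | .nextS φ, v, j => HasVar φ v j
  | .nextW φ, v, j => HasVar φ v j
  | .glob φ, v, j => HasVar φ v j
  | .untl φ ψ, v, j => HasVar φ v j ∨ HasVar ψ v j

/-- The set of constraints occurring in a formula. -/
def constraints : Formula V sortOf → Set (Constraint V sortOf)
  | .tt => ∅
  | .ff => ∅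
  | .atom c => {c}
  | .and φ ψ => constraints φ ∪ constraints ψ
  | .or φ ψ => constraints φ ∪ constraints ψ
  | .not φ => constraints φ
  | .nextS φ => constraints φ
  | .nextW φ => constraints φ
  | .glob φ => constraints φ
  | .untl φ ψ => constraints φ ∪ constraints ψ

end Formula

/-- `ψ` has lookahead at most `m` (all variables have offsets in `[0, m]`). -/
def LookaheadLe {V : Type} {sortOf : V → VSort} (ψ : Formula V sortOf) (m : ℕ) : Prop :=
  ∀ v j, ψ.HasVar v j → 0 ≤ j ∧ j ≤ (m : ℤ)

/-- `ψ` is satisfiable: some (nonempty) trace satisfies it. -/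
def Satisfiable {V : Type} {sortOf : V → VSort} (ψ : Formula V sortOf) : Prop :=
  ∃ τ : Trace V sortOf, τ ≠ [] ∧ Models τ ψ

/-- The four monitoring states of RV-LTL. -/
inductive RV where
  | ps | cs | cv | pv
  deriving DecidableEq

/-- `τ ⊨ ⟦ψ = s⟧`: ψ is in monitoring state `s` after trace `τ`. -/
def InState {V : Type} {sortOf : V → VSort} (τ : Trace V sortOf)
    (ψ : Formula V sortOf) : RV → Prop
  | .ps => Models τ ψ ∧ ∀ τ' : Trace V sortOf, τ' ≠ [] → Models (τ ++ τ') ψ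
  | .cs => Models τ ψ ∧ ∃ τ' : Trace V sortOf, τ' ≠ [] ∧ ¬ Models (τ ++ τ') ψ
  | .cv => ¬ Models τ ψ ∧ ∃ τ' : Trace V sortOf, τ' ≠ [] ∧ Models (τ ++ τ') ψ
  | .pv => ¬ Models τ ψ ∧ ∀ τ' : Trace V sortOf, τ' ≠ [] → ¬ Models (τ ++ τ') ψ

section Back

variable {V : Type} {sortOf : V → VSort}

/-- `back(c)`: constraints without lookahead get their variables read as "cur";
constraints with lookahead 1 become `Xw c̄` where `c̄` uses `pre`/`cur`
(i.e. all offsets are shifted by `-1`). -/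
def backC (c : Constraint V sortOf) : Formula V sortOf :=
  if c.hasLook then Formula.nextW (.atom (c.shift (-1))) else Formula.atom c

/-- Replace every constraint atom of a formula. -/
def Formula.mapAtoms (f : Constraint V sortOf → Formula V sortOf) :
    Formula V sortOf → Formula V sortOf
  | .tt => .tt
  | .ff => .ff
  | .atom c => f c
  | .and φ ψ => .and (mapAtoms f φ) (mapAtoms f ψ)
  | .or φ ψ => .or (mapAtoms f φ) (mapAtoms f ψ)
  | .not φ => .not (mapAtoms f φ)
  | .nextS φ => .nextS (mapAtoms f φ)
  | .nextW φ => .nextW (mapAtoms f φ)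
  | .glob φ => .glob (mapAtoms f φ)
  | .untl φ ψ => .untl (mapAtoms f φ) (mapAtoms f ψ)

/-- Negation normal form (`nnf true φ ≡ φ`, `nnf false φ ≡ ¬φ`). -/
def nnf : Bool → Formula V sortOf → Formula V sortOf
  | true, .tt => .tt
  | false, .tt => .ff
  | true, .ff => .ff
  | false, .ff => .tt
  | true, .atom c => .atom c
  | false, .atom c => .not (.atom c)
  | b, .not φ => nnf (!b) φ
  | true, .and φ ψ => .and (nnf true φ) (nnf true ψ)
  | false, .and φ ψ => .or (nnf false φ) (nnf false ψ)
  | true, .or φ ψ => .or (nnf true φ) (nnf true ψ)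
  | false, .or φ ψ => .and (nnf false φ) (nnf false ψ)
  | true, .nextS φ => .nextS (nnf true φ)
  | false, .nextS φ => .nextW (nnf false φ)
  | true, .nextW φ => .nextW (nnf true φ)
  | false, .nextW φ => .nextS (nnf false φ)
  | true, .glob φ => .glob (nnf true φ)
  | false, .glob φ => .untl .tt (nnf false φ)
  | true, .untl φ ψ => .untl (nnf true φ) (nnf true ψ)
  | false, .untl φ ψ =>
      .or (.glob (nnf false ψ)) (.untl (nnf false ψ) (.and (nnf false φ) (nnf false ψ)))

/-- `ψ_back`: replace each constraint `c` by `back(c)` and take negation normal form. -/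
def backF (ψ : Formula V sortOf) : Formula V sortOf :=
  nnf true (ψ.mapAtoms backC)

end Back

section Automata

variable {V : Type} {sortOf : V → VSort}

/-- Letters of the extended alphabet `Σ_λ`: constraints, plus the
last-instant marker `λ` and its negation. -/
inductive Lit (V : Type) (sortOf : V → VSort) where
  | c (c : Constraint V sortOf)
  | lam
  | nlam

/-- Symbols: sets of letters. -/
abbrev Sym (V : Type) (sortOf : V → VSort) : Type := Set (Lit V sortOf)

/-- Constraint part of a symbol. -/
def constrOf (ς : Sym V sortOf) : Set (Constraint V sortOf) := {c | Lit.c c ∈ ς}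

/-- Satisfiability of a set of constraints. -/
def SatC (S : Set (Constraint V sortOf)) : Prop :=
  ∃ σ : (v : V) → ℤ → Dom (sortOf v), ∀ c ∈ S, c.holds σ

/-- A symbol in `Σ_λ` is satisfiable if it does not contain both `λ` and `¬λ`
and its constraints are jointly satisfiable. -/
def SatSym (ς : Sym V sortOf) : Prop :=
  ¬ (Lit.lam ∈ ς ∧ Lit.nlam ∈ ς) ∧ SatC (constrOf ς)

/-- `R₁ ⊗ R₂`. -/
def owedge (R₁ R₂ : Set (Formula V sortOf × Sym V sortOf)) :
    Set (Formula V sortOf × Sym V sortOf) :=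
  {p | ∃ χ₁ ς₁ χ₂ ς₂, (χ₁, ς₁) ∈ R₁ ∧ (χ₂, ς₂) ∈ R₂ ∧ SatSym (ς₁ ∪ ς₂) ∧
        p = (Formula.and χ₁ χ₂, ς₁ ∪ ς₂)}

/-- `R₁ ⊕ R₂`. -/
def ovee (R₁ R₂ : Set (Formula V sortOf × Sym V sortOf)) :
    Set (Formula V sortOf × Sym V sortOf) :=
  {p | ∃ χ₁ ς₁ χ₂ ς₂, (χ₁, ς₁) ∈ R₁ ∧ (χ₂, ς₂) ∈ R₂ ∧ SatSym (ς₁ ∪ ς₂) ∧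
        p = (Formula.or χ₁ χ₂, ς₁ ∪ ς₂)}

/-- The transition function `δ` of the automata construction. -/
def delta : Formula V sortOf → Set (Formula V sortOf × Sym V sortOf)
  | .tt => {(.tt, ∅)}
  | .ff => {(.ff, ∅)}
  | .atom c => {(.tt, {Lit.c c}), (.ff, {Lit.c c.neg})}
  | .not φ =>
      match φ with
      | .atom c => {(.ff, {Lit.c c}), (.tt, {Lit.c c.neg})}
      | _ => ∅
  | .and φ ψ => owedge (delta φ) (delta ψ)
  | .or φ ψ => ovee (delta φ) (delta ψ)
  | .nextS φ => {(φ, {Lit.nlam}), (.ff, {Lit.lam})}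
  | .nextW φ => {(φ, {Lit.nlam}), (.tt, {Lit.lam})}
  | .glob φ => owedge (delta φ) {(.glob φ, {Lit.nlam}), (.tt, {Lit.lam})}
  | .untl φ ψ =>
      ovee (delta ψ) (owedge (delta φ) {(.untl φ ψ, {Lit.nlam}), (.ff, {Lit.lam})})

/-- Iterated `δ`. -/
def deltaStar : List (Sym V sortOf) → Formula V sortOf → Set (Formula V sortOf)
  | [], φ => {φ}
  | ς :: w, φ => {χ | ∃ φ', (φ', ς) ∈ delta φ ∧ χ ∈ deltaStar w φ'}

/-- States of the NFA `N_{ψ_back}`: formulas, plus the distinguished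
final state `q₊` and non-final state `q₋`. -/
inductive NState (V : Type) (sortOf : V → VSort) where
  | fm (φ : Formula V sortOf)
  | plus
  | minus

/-- The transition relation `ϱ` of the NFA, obtained from `δ` by removing
the `λ` markers. -/
inductive NTrans : NState V sortOf → Sym V sortOf → NState V sortOf → Prop where
  | nolam {φ φ' : Formula V sortOf} {ς : Sym V sortOf} :
      (φ', ς) ∈ delta φ → Lit.lam ∉ ς →
      NTrans (.fm φ) (ς \ {Lit.nlam}) (.fm φ')
  | toPlus {φ : Formula V sortOf} {ς : Sym V sortOf} :
      (Formula.tt, ς) ∈ delta φ → Lit.lam ∈ ς →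
      NTrans (.fm φ) (ς \ {Lit.lam}) .plus
  | toMinus {φ : Formula V sortOf} {ς : Sym V sortOf} :
      (Formula.ff, ς) ∈ delta φ → Lit.lam ∈ ς →
      NTrans (.fm φ) (ς \ {Lit.lam}) .minus

/-- Multi-step runs of the NFA. -/
inductive NSteps : NState V sortOf → List (Sym V sortOf) → NState V sortOf → Prop where
  | refl (q : NState V sortOf) : NSteps q [] q
  | step {q q' q'' : NState V sortOf} {ς : Sym V sortOf} {w : List (Sym V sortOf)} :
      NTrans q ς q' → NSteps q' w q'' → NSteps q (ς :: w) q''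

/-- The NFA for `ψb` (initial state `ψb`) accepts the word `w`. -/
def NAccepts (ψb : Formula V sortOf) (w : List (Sym V sortOf)) : Prop :=
  ∃ q' : NState V sortOf, NSteps (.fm ψb) w q' ∧ (q' = NState.fm .tt ∨ q' = NState.plus)

/-- `C± = C ∪ {neg c | c ∈ C}`. -/
def withNegs (Cs : Set (Constraint V sortOf)) : Set (Constraint V sortOf) :=
  Cs ∪ Constraint.neg '' Cs

/-- A symbol belongs to the alphabet `Σ = 2^{C±}` (only constraint letters, from `C±`). -/
def InSigma (Cs : Set (Constraint V sortOf)) (ς : Sym V sortOf) : Prop :=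
  ∀ l ∈ ς, ∃ c ∈ withNegs Cs, l = Lit.c c

/-- A word over `Σ_λ`/`Σ` is well-formed if its first symbol mentions
no `pre` variables. -/
def WellFormedW : List (Sym V sortOf) → Prop
  | [] => False
  | ς₀ :: _ => ∀ c ∈ constrOf ς₀, ¬ MentionsPre c

/-- Consistency of a word of symbols with a trace. -/
def ConsistentL (w : List (Sym V sortOf)) (τ : Trace V sortOf) : Prop :=
  w.length = τ.length ∧
  ∀ i, i < w.length → ∀ c ∈ constrOf (w.getD i ∅), c.holds (traceVal τ i)

/-- Consistency of a word of constraint sets with a trace. -/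
def ConsistentC (w : List (Set (Constraint V sortOf))) (τ : Trace V sortOf) : Prop :=
  w.length = τ.length ∧
  ∀ i, i < w.length → ∀ c ∈ w.getD i ∅, c.holds (traceVal τ i)

/-- λ-consistency of a symbol with instant `i` of a trace. -/
def LamCons (ς : Sym V sortOf) (τ : Trace V sortOf) (i : ℕ) : Prop :=
  ((i < τ.length - 1 ∧ Lit.lam ∉ ς) ∨ (i = τ.length - 1 ∧ Lit.nlam ∉ ς)) ∧
  (if i = 0 then
    (∀ c ∈ constrOf ς, ¬ MentionsPre c) ∧ ∀ c ∈ constrOf ς, c.holds (traceVal τ 0)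
  else
    ∀ c ∈ constrOf ς, c.holds (traceVal τ i))

/-- Membership in `L_back`: negation normal form over constraints on
`V_pre ∪ V_cur`. -/
def IsLB : Formula V sortOf → Prop
  | .atom c => OnlyPC c
  | .not φ => match φ with
      | .atom c => OnlyPC c
      | _ => False
  | .and φ ψ => IsLB φ ∧ IsLB ψ
  | .or φ ψ => IsLB φ ∧ IsLB ψ
  | .nextS φ => IsLB φ
  | .nextW φ => IsLB φ
  | .glob φ => IsLB φ
  | .untl φ ψ => IsLB φ ∧ IsLB ψ
  | _ => False

/-- Safe lookback. -/
def SafeLB : Formula V sortOf → Prop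
  | .tt => True
  | .ff => True
  | .atom c => ¬ MentionsPre c
  | .not φ => SafeLB φ
  | .and φ ψ => SafeLB φ ∧ SafeLB ψ
  | .or φ ψ => SafeLB φ ∧ SafeLB ψ
  | .nextS _ => True
  | .nextW _ => True
  | .glob φ => SafeLB φ
  | .untl φ ψ => SafeLB φ ∧ SafeLB ψ

end Automata

section DFA

variable {V : Type} {sortOf : V → VSort}

/-- `ThetaOf Cs`: the maximal satisfiable subsets of `Cs±`. -/
def ThetaOf (Cs : Set (Constraint V sortOf)) : Set (Set (Constraint V sortOf)) :=
  {ς | ς ⊆ withNegs Cs ∧ SatC ς ∧ ∀ c ∈ withNegs Cs, SatC (insert c ς) → c ∈ ς}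

/-- `Θ_cur`: maximal satisfiable subsets of `C_cur±`, with `C_cur` the
constraints of `Cs` mentioning only `cur` variables. -/
def ThetaCur (Cs : Set (Constraint V sortOf)) : Set (Set (Constraint V sortOf)) :=
  ThetaOf {c ∈ Cs | OnlyCur c}

/-- A word in `Θ_cur Θ*`. -/
def ThWord (Cs : Set (Constraint V sortOf)) (w : List (Set (Constraint V sortOf))) :
    Prop :=
  ∃ ς₀ w', w = ς₀ :: w' ∧ ς₀ ∈ ThetaCur Cs ∧ ∀ ς ∈ w', ς ∈ ThetaOf Cs

/-- States of the DFA: sets of NFA states (subset construction). -/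
abbrev DState (V : Type) (sortOf : V → VSort) : Type := Set (NState V sortOf)

/-- Initial DFA state `{q₀}`. -/
def q0 (ψb : Formula V sortOf) : DState V sortOf := {NState.fm ψb}

/-- The transition function `Δ` of the subset construction. -/
def DeltaT (P : DState V sortOf) (ς : Set (Constraint V sortOf)) : DState V sortOf :=
  {q' | ∃ q ∈ P, ∃ ς' : Sym V sortOf, NTrans q ς' q' ∧ ∀ l ∈ ς', ∃ c ∈ ς, l = Lit.c c}

/-- One DFA step: from the initial state `{q₀}` on symbols of `Θ_cur`, from other
states on symbols of `Θ`. -/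
def DTrans (ψb : Formula V sortOf) (P : DState V sortOf)
    (ς : Set (Constraint V sortOf)) (P' : DState V sortOf) : Prop :=
  ((P = q0 ψb ∧ ς ∈ ThetaCur ψb.constraints) ∨
   (P ≠ q0 ψb ∧ ς ∈ ThetaOf ψb.constraints)) ∧
  P' = DeltaT P ς

/-- Multi-step runs of the DFA: `P →*_w P'`. -/
inductive DSteps (ψb : Formula V sortOf) :
    DState V sortOf → List (Set (Constraint V sortOf)) → DState V sortOf → Prop where
  | refl (P : DState V sortOf) : DSteps ψb P [] P
  | step {P P' P'' : DState V sortOf} {ς : Set (Constraint V sortOf)}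
      {w : List (Set (Constraint V sortOf))} :
      DTrans ψb P ς P' → DSteps ψb P' w P'' → DSteps ψb P (ς :: w) P''

/-- Final (accepting) DFA states. -/
def DFinal (P : DState V sortOf) : Prop :=
  NState.fm Formula.tt ∈ P ∨ NState.plus ∈ P

/-- `P'` is reachable from `P` in the DFA. -/
def DReach (ψb : Formula V sortOf) (P P' : DState V sortOf) : Prop :=
  ∃ w, DSteps ψb P w P'

/-- The DFA for `ψb` accepts the word `w`. -/
def DAccepts (ψb : Formula V sortOf) (w : List (Set (Constraint V sortOf))) : Prop :=
  ∃ P : DState V sortOf, DSteps ψb (q0 ψb) w P ∧ DFinal P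

end DFA

section History

variable {V : Type} {sortOf : V → VSort}

/-- Semantic formulas with free variables `V₀ ∪ V` (quantifier elimination lets
us identify history constraints with their sets of models): the first argument
is the assignment of the `V₀`-copies, the second that of `V`. -/
abbrev HF (V : Type) (sortOf : V → VSort) : Type :=
  Assign V sortOf → Assign V sortOf → Prop

/-- Valuation reading `cur` variables in `a` and `pre` variables in `u`. -/
def pairVal (u a : Assign V sortOf) : (v : V) → ℤ → Dom (sortOf v) :=
  fun v j => if j = 0 then a v else if j = -1 then u v else default

/-- `φ_init = ⋀_{v ∈ V} v = v₀`. -/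
def hinit : HF V sortOf := fun a₀ a => ∀ v, a₀ v = a v

/-- `update(φ, C') = ∃Ū. φ(Ū) ∧ ⋀ C'(Ū, V̄)`. -/
def updateH (φ : HF V sortOf) (ς : Set (Constraint V sortOf)) : HF V sortOf :=
  fun a₀ a => ∃ u : Assign V sortOf, φ a₀ u ∧ ∀ c ∈ ς, c.holds (pairVal u a)

/-- The history constraint `h(w)`. -/
def histC (w : List (Set (Constraint V sortOf))) : HF V sortOf :=
  w.foldl updateH hinit

/-- Logical equivalence of semantic formulas. -/
def HFEquiv (φ χ : HF V sortOf) : Prop := ∀ a₀ a, φ a₀ a ↔ χ a₀ a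

/-- Satisfiability of a semantic formula. -/
def HSat (φ : HF V sortOf) : Prop := ∃ a₀ a, φ a₀ a

/-- The defining property of a history set for the DFA of `ψb`. -/
def HistProp (ψb : Formula V sortOf) (Φ : Set (DState V sortOf × HF V sortOf)) : Prop :=
  ∀ (P' : DState V sortOf) (w : List (Set (Constraint V sortOf))),
    ThWord ψb.constraints w → DSteps ψb (q0 ψb) w P' →
    ∃ φ, (P', φ) ∈ Φ ∧ HFEquiv (histC w) φ

/-- A history set: a minimal set with the above property. -/
def IsHistorySet (ψb : Formula V sortOf)
    (Φ : Set (DState V sortOf × HF V sortOf)) : Prop :=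
  HistProp ψb Φ ∧ ∀ Φ' ⊆ Φ, HistProp ψb Φ' → Φ' = Φ

/-- A summary `(Φ, ∼)` for the DFA of `ψb`. -/
structure Summary (ψb : Formula V sortOf) where
  Phi : Set (DState V sortOf × HF V sortOf)
  sim : HF V sortOf → HF V sortOf → Prop
  hist : IsHistorySet ψb Phi
  equiv : Equivalence sim
  contains_equiv : ∀ φ χ : HF V sortOf,
    (∃ q, (q, φ) ∈ Phi) → (∃ q, (q, χ) ∈ Phi) → HFEquiv φ χ → sim φ χ
  cond_a : ∀ (q : DState V sortOf) (φ χ : HF V sortOf),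
    (q, φ) ∈ Phi → (q, χ) ∈ Phi → sim φ χ →
    ∀ a₀ a, φ a₀ a → ∃ a', χ a₀ a'
  cond_b : ∀ (q : DState V sortOf) (φ χ : HF V sortOf),
    (q, φ) ∈ Phi → (q, χ) ∈ Phi → sim φ χ →
    ∀ ς q', DTrans ψb q ς q' → sim (updateH φ ς) (updateH χ ς)

/-- The summary is finite: `∼` has finitely many classes on `Φ`. -/
def FiniteSummary {ψb : Formula V sortOf} (S : Summary ψb) : Prop :=
  ∃ R : Set (HF V sortOf), R.Finite ∧
    ∀ q φ, (q, φ) ∈ S.Phi → ∃ χ ∈ R, S.sim φ χ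

/-- A constraint graph `CG_ψ(P₀, ∼)`: the inductively generated graph whose
nodes pair DFA states with (∼-representatives of) history formulas. -/
structure CGraph (ψb : Formula V sortOf) (P₀ : DState V sortOf)
    (sim : HF V sortOf → HF V sortOf → Prop) where
  nodes : Set (DState V sortOf × HF V sortOf)
  edge : (DState V sortOf × HF V sortOf) → Set (Constraint V sortOf) →
         (DState V sortOf × HF V sortOf) → Prop
  init_mem : (P₀, hinit) ∈ nodes
  edge_mem : ∀ n ς n', edge n ς n' → n ∈ nodes ∧ n' ∈ nodes
  edge_sound : ∀ n ς n', edge n ς n' →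
    DTrans ψb n.1 ς n'.1 ∧ HSat (updateH n.2 ς) ∧ sim n'.2 (updateH n.2 ς)
  closed : ∀ n ∈ nodes, ∀ ς (P' : DState V sortOf),
    DTrans ψb n.1 ς P' → HSat (updateH n.2 ς) → ∃ φ', edge n ς (P', φ')
  minimal : ∀ n ∈ nodes,
    Relation.ReflTransGen (fun a b => ∃ ς, edge a ς b) (P₀, hinit) n

/-- Paths in a constraint graph, labeled by words. -/
inductive CGSteps {ψb : Formula V sortOf} {P₀ : DState V sortOf}
    {sim : HF V sortOf → HF V sortOf → Prop} (G : CGraph ψb P₀ sim) :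
    (DState V sortOf × HF V sortOf) → List (Set (Constraint V sortOf)) →
    (DState V sortOf × HF V sortOf) → Prop where
  | refl (n : DState V sortOf × HF V sortOf) : CGSteps G n [] n
  | step {n n' n'' : DState V sortOf × HF V sortOf}
      {ς : Set (Constraint V sortOf)} {w : List (Set (Constraint V sortOf))} :
      G.edge n ς n' → CGSteps G n' w n'' → CGSteps G n (ς :: w) n''

/-- `α ⊨ FSat(G)(V̄)`: some final node's formula is satisfiable with its
`V₀`-part set to `α`. -/
def FSatAt {ψb : Formula V sortOf} {P₀ : DState V sortOf}
    {sim : HF V sortOf → HF V sortOf → Prop} (G : CGraph ψb P₀ sim)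
    (α : Assign V sortOf) : Prop :=
  ∃ n ∈ G.nodes, DFinal n.1 ∧ ∃ b, n.2 α b

/-- `α ⊨ FUns(G)(V̄)`: dually, with non-final nodes. -/
def FUnsAt {ψb : Formula V sortOf} {P₀ : DState V sortOf}
    {sim : HF V sortOf → HF V sortOf → Prop} (G : CGraph ψb P₀ sim)
    (α : Assign V sortOf) : Prop :=
  ∃ n ∈ G.nodes, ¬ DFinal n.1 ∧ ∃ b, n.2 α b

end History

theorem _root_.List.headI_append_of_ne_nil {α : Type*} [Inhabited α] {l : List α} (l' : List α)
    (hl : l ≠ []) : (l ++ l').headI = l.headI := by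
  obtain ⟨x, xs, rfl⟩ := List.exists_cons_of_ne_nil hl
  rfl

section HistoryConstraint

variable {V : Type} {sortOf : V → VSort}

theorem Expr.eval_congr {σ σ' : (v : V) → ℤ → Dom (sortOf v)} :
    ∀ {s} (e : Expr V sortOf s), (∀ v j, e.HasVar v j → σ v j = σ' v j) →
      e.eval σ = e.eval σ'
  | _, .var v j, h => h v j ⟨rfl, rfl⟩
  | _, .const _, _ => rfl
  | _, .add e₁ e₂, h => by
      rw [Expr.eval, Expr.eval, eval_congr e₁ fun v j hv => h v j (.inl hv),
        eval_congr e₂ fun v j hv => h v j (.inr hv)]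
  | _, .smul k e, h => by rw [Expr.eval, Expr.eval, eval_congr e h]

theorem Constraint.holds_congr {σ σ' : (v : V) → ℤ → Dom (sortOf v)} (c : Constraint V sortOf)
    (h : ∀ v j, c.HasVar v j → σ v j = σ' v j) : c.holds σ ↔ c.holds σ' := by
  cases c <;> simp only [Constraint.holds] <;>
    rw [Expr.eval_congr _ fun v j hv => h v j (.inl hv),
      Expr.eval_congr _ fun v j hv => h v j (.inr hv)]

theorem OnlyPC.holds_congr {c : Constraint V sortOf} (hc : OnlyPC c)
    {σ σ' : (v : V) → ℤ → Dom (sortOf v)} (h : ∀ v j, (j = 0 ∨ j = -1) → σ v j = σ' v j) :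
    c.holds σ ↔ c.holds σ' :=
  c.holds_congr fun v j hv => h v j (hc v j hv)

theorem OnlyPC.neg {c : Constraint V sortOf} (hc : OnlyPC c) : OnlyPC c.neg := by
  intro v j hv
  apply hc v j
  cases c <;> simp only [Constraint.neg, Constraint.HasVar] at hv ⊢ <;> tauto

theorem onlyPC_of_mem_thetaOf {C : Set (Constraint V sortOf)} (hC : ∀ c ∈ C, OnlyPC c)
    {ς : Set (Constraint V sortOf)} (hς : ς ∈ ThetaOf C) {c : Constraint V sortOf}
    (hc : c ∈ ς) : OnlyPC c := by
  rcases hς.1 hc with hc | ⟨c', hc', rfl⟩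
  · exact hC c hc
  · exact (hC c' hc').neg

theorem traceVal_append_of_lt (τ τ' : Trace V sortOf) {i : ℕ} {j : ℤ}
    (h : (i : ℤ) + j < τ.length) (v : V) :
    traceVal (τ ++ τ') i v j = traceVal τ i v j := by
  unfold traceVal
  split_ifs
  · rw [List.getD_append _ _ _ _ (by omega)]
  · rfl

theorem traceVal_append_singleton_length (τ : Trace V sortOf) (hτ : τ ≠ [])
    (a : Assign V sortOf) (v : V) {j : ℤ} (hj : j = 0 ∨ j = -1) :
    traceVal (τ ++ [a]) τ.length v j = pairVal (τ.getLastD defaultA) a v j := by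
  have hpos : 0 < τ.length := List.length_pos_iff.2 hτ
  rcases hj with rfl | rfl
  · simp [traceVal, pairVal, List.getD_eq_getElem?_getD]
  · have hidx : ((τ.length : ℤ) + -1).toNat = τ.length - 1 := by omega
    simp only [traceVal, pairVal, if_pos (show (0 : ℤ) ≤ τ.length + -1 by omega), hidx,
      List.getD_append _ _ _ _ (show τ.length - 1 < τ.length by omega)]
    simp [List.getD_eq_getElem?_getD, List.getLastD_eq_getLast?, List.getLast?_eq_getElem?]

theorem consistentC_append_singleton {ws : List (Set (Constraint V sortOf))}
    {ς : Set (Constraint V sortOf)} {τ : Trace V sortOf} (hτ : τ ≠ []) (a : Assign V sortOf)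
    (hws : ∀ s ∈ ws, ∀ c ∈ s, OnlyPC c) (hς : ∀ c ∈ ς, OnlyPC c) :
    ConsistentC (ws ++ [ς]) (τ ++ [a]) ↔
      ConsistentC ws τ ∧ ∀ c ∈ ς, c.holds (pairVal (τ.getLastD defaultA) a) := by
  have hprefix : ∀ i < ws.length, ∀ c ∈ ws.getD i ∅, i < τ.length →
      (c.holds (traceVal (τ ++ [a]) i) ↔ c.holds (traceVal τ i)) := by
    intro i hi c hc hiτ
    have hmem : ws.getD i ∅ ∈ ws := by
      rw [List.getD_eq_getElem _ _ hi]
      exact List.getElem_mem hi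
    refine (hws _ hmem c hc).holds_congr fun v j hj => traceVal_append_of_lt τ [a] ?_ v
    omega
  have hlast : ∀ c ∈ ς, (c.holds (traceVal (τ ++ [a]) τ.length) ↔
      c.holds (pairVal (τ.getLastD defaultA) a)) := fun c hc =>
    (hς c hc).holds_congr fun v j hj => traceVal_append_singleton_length τ hτ a v hj
  simp only [ConsistentC, List.length_append, List.length_singleton, add_left_inj]
  constructor
  · rintro ⟨hlen, hcons⟩
    refine ⟨⟨hlen, fun i hi c hc => ?_⟩, fun c hc => ?_⟩
    · refine (hprefix i hi c hc (hlen ▸ hi)).1 (hcons i (by omega) c ?_)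
      rwa [List.getD_append _ _ _ _ hi]
    · refine (hlast c hc).1 (hlen ▸ hcons ws.length (by omega) c ?_)
      simpa [List.getD_eq_getElem?_getD] using hc
  · rintro ⟨⟨hlen, hcons⟩, hς⟩
    refine ⟨hlen, fun i hi c hc => ?_⟩
    rcases Nat.lt_succ_iff_lt_or_eq.1 hi with hi | rfl
    · rw [List.getD_append _ _ _ _ hi] at hc
      exact (hprefix i hi c hc (hlen ▸ hi)).2 (hcons i hi c hc)
    · have hc : c ∈ ς := by simpa [List.getD_eq_getElem?_getD] using hc
      exact hlen ▸ (hlast c hc).2 (hς c hc)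

theorem consistentC_singleton_empty {τ : Trace V sortOf} :
    ConsistentC [∅] τ ↔ ∃ b, τ = [b] := by
  constructor
  · rintro ⟨hlen, -⟩
    exact List.length_eq_one_iff.1 hlen.symm
  · rintro ⟨b, rfl⟩
    refine ⟨rfl, fun i hi c hc => ?_⟩
    obtain rfl : i = 0 := by simpa using hi
    simp at hc

theorem histC_append_singleton (w : List (Set (Constraint V sortOf)))
    (ς : Set (Constraint V sortOf)) :
    histC (w ++ [ς]) = updateH (histC w) ς := by
  simp [histC, List.foldl_append]

theorem histC_iff_exists_consistentC (w : List (Set (Constraint V sortOf)))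
    (hw : ∀ ς ∈ w, ∀ c ∈ ς, OnlyPC c) (a₀ a : Assign V sortOf) :
    histC w a₀ a ↔
      ∃ τ : Trace V sortOf, ConsistentC (∅ :: w) τ ∧
        τ.headI = a₀ ∧ τ.getLastD defaultA = a := by
  induction w using List.reverseRecOn generalizing a with
  | nil =>
    simp only [histC, List.foldl_nil, hinit, consistentC_singleton_empty]
    constructor
    · intro h
      exact ⟨[a], ⟨a, rfl⟩, funext fun v => (h v).symm, rfl⟩
    · rintro ⟨_, ⟨b, rfl⟩, rfl, rfl⟩ v
      rfl
  | append_singleton w ς ih =>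
    have hw' : ∀ s ∈ ∅ :: w, ∀ c ∈ s, OnlyPC c := by
      simp only [List.mem_cons]
      rintro s (rfl | hs) c hc
      exacts [absurd hc (Set.notMem_empty c), hw s (by simp [hs]) c hc]
    have hς : ∀ c ∈ ς, OnlyPC c := hw ς (by simp)
    have ih := ih fun s hs => hw s (by simp [hs])
    rw [histC_append_singleton, ← List.cons_append]
    constructor
    · rintro ⟨u, hu, hstep⟩
      obtain ⟨τ, hτ, hhead, hlast⟩ := (ih u).1 hu
      have hne : τ ≠ [] := by rintro rfl; simp [ConsistentC] at hτ
      refine ⟨τ ++ [a], (consistentC_append_singleton hne a hw' hς).2 ⟨hτ, hlast ▸ hstep⟩,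
        ?_, by simp⟩
      rw [List.headI_append_of_ne_nil _ hne, hhead]
    · rintro ⟨τ, hτ, hhead, hlast⟩
      obtain ⟨τ, b, rfl⟩ : ∃ τ' b, τ = τ' ++ [b] := by
        rcases List.eq_nil_or_concat τ with rfl | ⟨τ', b, rfl⟩
        · simp [ConsistentC] at hτ
        · exact ⟨τ', b, List.concat_eq_append⟩
      have hne : τ ≠ [] := by rintro rfl; simp [ConsistentC] at hτ
      obtain rfl : b = a := by simpa using hlast
      obtain ⟨hτ, hstep⟩ := (consistentC_append_singleton hne b hw' hς).1 hτ
      exact ⟨_, (ih _).2 ⟨τ, hτ, by rwa [List.headI_append_of_ne_nil _ hne] at hhead, rfl⟩, hstep⟩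

end HistoryConstraint

theorem history_constraint_abstraction_general
    {V : Type} {sortOf : V → VSort}
    (C : Set (Constraint V sortOf)) (hpc : ∀ c ∈ C, OnlyPC c)
    (w : List (Set (Constraint V sortOf))) (hw : ∀ ς ∈ w, ς ∈ ThetaOf C)
    (a₀ a : Assign V sortOf) :
    histC w a₀ a ↔
    ∃ τ : Trace V sortOf, ConsistentC (∅ :: w) τ ∧
      τ.headI = a₀ ∧ τ.getLastD defaultA = a :=
  histC_iff_exists_consistentC w (fun _ hς _ hc => onlyPC_of_mem_thetaOf hpc (hw _ hς) hc) a₀ a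

/-- the history constraint `h(w)` is satisfied by `ν` iff
`⟨∅⟩·w` is consistent with some trace `α₀,…,α_k` whose first assignment matches
the `V₀`-part of `ν` and whose last assignment matches the `V`-part of `ν`. -/
theorem history_constraint_abstraction
    {V : Type} [Fintype V] [Nonempty V] {sortOf : V → VSort}
    (C : Set (Constraint V sortOf)) (hC : C.Finite) (hpc : ∀ c ∈ C, OnlyPC c)
    (w : List (Set (Constraint V sortOf))) (hw : ∀ ς ∈ w, ς ∈ ThetaOf C)
    (a₀ a : Assign V sortOf) :
    histC w a₀ a ↔
    ∃ τ : Trace V sortOf, ConsistentC (∅ :: w) τ ∧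
      τ.headI = a₀ ∧ τ.getLastD defaultA = a :=
  history_constraint_abstraction_general C hpc w hw a₀ a

end ALTLf
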